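/- arXiv:2008.12576 — 3 statements merged into one kernel-verified Lean document; each statement's English description precedes it below -/
import Mathlib

section
/- Let g be a positive integer, σ > 0, N a positive integer, and define ε_{g,σ} = 1 − (1/√2)(1 + 2·Σ_{k∈ℕᴺ, k≠0} exp(−g²‖k‖₂²σ²/2)). Then ε_{g,σ} ≥ 1 − (1/√2)(2·(1 − exp(−g²σ²/2))^{−N} − 1). -/
/-!
Write `c = g²σ²/2` and `q = exp (-c) < 1`. Since `m ≤ m²` for natural `m`, each Gaussian term
`exp (-c ‖k‖²)` is at most `∏ i, q ^ kᵢ`, and these products sum over all of `ℕᴺ` to `(1 - q)⁻ᴺ`.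
Removing the term `k = 0`, which equals `1`, bounds the sum over `k ≠ 0` by `(1 - q)⁻ᴺ - 1`.
-/

open Real Finset

theorem Summable.tsum_subtype_ne_eq_sub {α β : Type*} [AddCommGroup α] [UniformSpace α]
    [IsUniformAddGroup α] [CompleteSpace α] [T2Space α] {f : β → α} (hf : Summable f) (b : β) :
    ∑' x : {x // x ≠ b}, f x = ∑' x, f x - f b := by
  have h := hf.tsum_subtype_add_tsum_subtype_compl {b}
  rw [tsum_singleton] at h
  exact eq_sub_of_add_eq' h

theorem HasSum.fin_pi_prod {β : Type*} {f : β → ℝ} {s : ℝ} (hf : HasSum f s)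
    (hf0 : 0 ≤ f) (n : ℕ) : HasSum (fun k : Fin n → β => ∏ i, f (k i)) (s ^ n) := by
  induction n with
  | zero => simp
  | succ n ih =>
    set g := fun k : Fin n → β => ∏ i, f (k i)
    have hg0 : 0 ≤ g := fun k => prod_nonneg fun i _ => hf0 _
    have hprod := hf.mul ih (hf.summable.mul_of_nonneg ih.summable hf0 hg0)
    rw [pow_succ', ← (Fin.consEquiv fun _ => β).hasSum_iff]
    simpa [g, Function.comp_def, Fin.consEquiv, Fin.prod_univ_succ] using hprod

theorem exp_neg_mul_sum_sq_le_prod_pow {ι : Type*} [Fintype ι] {c : ℝ} (hc : 0 ≤ c)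
    (k : ι → ℕ) : exp (-(c * ∑ i, (k i : ℝ) ^ 2)) ≤ ∏ i, exp (-c) ^ k i := by
  have hk : ∀ i, (k i : ℝ) ≤ (k i : ℝ) ^ 2 := fun i => by
    exact_mod_cast Nat.le_self_pow two_ne_zero (k i)
  calc exp (-(c * ∑ i, (k i : ℝ) ^ 2)) ≤ exp (-(c * ∑ i, (k i : ℝ))) := by
        gcongr with i; exact hk i
    _ = ∏ i, exp (-c) ^ k i := by
        simp only [mul_sum, ← sum_neg_distrib, exp_sum, ← exp_nat_mul]
        congr! 2 with i; ring

theorem tsum_ne_zero_exp_neg_mul_sum_sq_le {N : ℕ} {c : ℝ} (hc : 0 < c) :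
    ∑' k : {k : Fin N → ℕ // k ≠ 0}, exp (-(c * ∑ i, (k.1 i : ℝ) ^ 2))
      ≤ ((1 - exp (-c))⁻¹) ^ N - 1 := by
  have hq : exp (-c) < 1 := exp_lt_one_iff.mpr (neg_neg_of_pos hc)
  have hgeom := (hasSum_geometric_of_lt_one (exp_pos _).le hq).fin_pi_prod
    (fun m => pow_nonneg (exp_pos _).le m) N
  have hbound := exp_neg_mul_sum_sq_le_prod_pow (ι := Fin N) hc.le
  have hsum : Summable fun k : Fin N → ℕ => exp (-(c * ∑ i, (k i : ℝ) ^ 2)) :=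
    hgeom.summable.of_nonneg_of_le (fun _ => (exp_pos _).le) hbound
  rw [hsum.tsum_subtype_ne_eq_sub 0, ← hgeom.tsum_eq]
  simpa using hsum.tsum_le_tsum hbound hgeom.summable

theorem epsilon_geometric_lower_bound_general (g N : ℕ) (hg : 0 < g) (σ : ℝ) (hσ : 0 < σ) :
    1 - (1 / Real.sqrt 2) *
        (1 + 2 * ∑' k : {k : Fin N → ℕ // k ≠ 0},
          Real.exp (-((g : ℝ) ^ 2 * (∑ i, ((k.1 i : ℝ)) ^ 2) * σ ^ 2) / 2))
      ≥ 1 - (1 / Real.sqrt 2) *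
        (2 * ((1 - Real.exp (-((g : ℝ) ^ 2 * σ ^ 2) / 2))⁻¹) ^ N - 1) := by
  set c := (g : ℝ) ^ 2 * σ ^ 2 / 2
  have hc : 0 < c := by positivity
  have hterm : ∀ k : Fin N → ℕ, -((g : ℝ) ^ 2 * (∑ i, (k i : ℝ) ^ 2) * σ ^ 2) / 2
      = -(c * ∑ i, (k i : ℝ) ^ 2) := fun k => by ring
  simp only [hterm]
  rw [show -((g : ℝ) ^ 2 * σ ^ 2) / 2 = -c by ring, ge_iff_le, sub_le_sub_iff_left]
  gcongr _ * ?_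
  linarith [tsum_ne_zero_exp_neg_mul_sum_sq_le (N := N) hc]

/-- The no-go bound `ε_{g,σ}` is lower bounded via a geometric-series relaxation. -/
theorem epsilon_geometric_lower_bound (g N : ℕ) (hg : 0 < g) (hN : 0 < N) (σ : ℝ) (hσ : 0 < σ) :
    1 - (1 / Real.sqrt 2) *
        (1 + 2 * ∑' k : {k : Fin N → ℕ // k ≠ 0},
          Real.exp (-((g : ℝ) ^ 2 * (∑ i, ((k.1 i : ℝ)) ^ 2) * σ ^ 2) / 2))
      ≥ 1 - (1 / Real.sqrt 2) *
        (2 * ((1 - Real.exp (-((g : ℝ) ^ 2 * σ ^ 2) / 2))⁻¹) ^ N - 1) :=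
  epsilon_geometric_lower_bound_general g N hg σ hσ
end

section
/- For every positive integer n, n^n/n! ≤ e^n/√(2πn). -/
open Real

/-- Stirling-type bound: `n^n / n! ≤ eⁿ / √(2πn)` for every positive integer `n`. -/
theorem pow_div_factorial_le (n : ℕ) (hn : 0 < n) :
    (n : ℝ) ^ n / (Nat.factorial n : ℝ) ≤ Real.exp n / Real.sqrt (2 * Real.pi * n) := by
  have hstirling := Stirling.le_factorial_stirling n
  rw [div_pow, ← exp_nat_mul, mul_one, mul_div_assoc', div_le_iff₀ (exp_pos _)] at hstirling
  rw [div_le_div_iff₀ (by positivity) (by positivity)]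
  linarith
end

section
/- Let g be a positive integer and γ ∈ [0,1]. Define ξ = Σ_{k=0}^{g−1} √(C(g,k)·C(2g,k)) · (1−γ)^{3g/2−k} · γ^k, where C(n,k) is the binomial coefficient. Then 0 ≤ ξ ≤ 1. -/
/-!
Each term of `ξ` factors as `√(b_g(k)) · √(b_{2g}(k))`, where `b_n(k) = C(n,k) (1-γ)^{n-k} γ^k`
are the binomial probabilities; the power `(1-γ)^{3g/2-k}` splits because
`3g/2 - k = ((g-k) + (2g-k))/2`. By Cauchy–Schwarz, `ξ` is then at most the product of the square
roots of two partial sums of binomial distributions, each of which is at most `1`.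
-/

open Finset

def binomialWeight (n : ℕ) (p : ℝ) (k : ℕ) : ℝ :=
  n.choose k * (1 - p) ^ (n - k) * p ^ k

lemma binomialWeight_nonneg {p : ℝ} (hp0 : 0 ≤ p) (hp1 : p ≤ 1) (n k : ℕ) :
    0 ≤ binomialWeight n p k := by
  have : 0 ≤ 1 - p := sub_nonneg.2 hp1
  unfold binomialWeight
  positivity

lemma sum_range_succ_binomialWeight (n : ℕ) (p : ℝ) :
    ∑ k ∈ range (n + 1), binomialWeight n p k = 1 := by
  have := add_pow p (1 - p) n
  simp only [add_sub_cancel, one_pow] at this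
  rw [this]
  refine sum_congr rfl fun k _ => ?_
  unfold binomialWeight
  ring

lemma sum_range_binomialWeight_le_one {m n : ℕ} (hm : m ≤ n + 1) {p : ℝ} (hp0 : 0 ≤ p)
    (hp1 : p ≤ 1) : ∑ k ∈ range m, binomialWeight n p k ≤ 1 := by
  calc ∑ k ∈ range m, binomialWeight n p k
      ≤ ∑ k ∈ range (n + 1), binomialWeight n p k :=
        sum_le_sum_of_subset_of_nonneg (range_subset_range.2 hm)
          fun k _ _ => binomialWeight_nonneg hp0 hp1 n k
    _ = 1 := sum_range_succ_binomialWeight n p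

lemma sqrt_pow_mul_sqrt_pow {x : ℝ} (hx : 0 ≤ x) (m n : ℕ) :
    √(x ^ m) * √(x ^ n) = x ^ (((m : ℝ) + n) / 2) := by
  rw [← Real.sqrt_mul (pow_nonneg hx m), ← pow_add, Real.sqrt_eq_rpow,
    ← Real.rpow_natCast_mul hx]
  push_cast
  ring_nf

lemma sqrt_binomialWeight_mul_sqrt_binomialWeight {p : ℝ} (hp0 : 0 ≤ p) (hp1 : p ≤ 1)
    (m n k : ℕ) :
    √(binomialWeight m p k) * √(binomialWeight n p k) =
      √((m.choose k : ℝ) * (n.choose k : ℝ)) *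
        (1 - p) ^ ((((m - k : ℕ) : ℝ) + ((n - k : ℕ) : ℝ)) / 2) * p ^ k := by
  have hq : 0 ≤ 1 - p := sub_nonneg.2 hp1
  unfold binomialWeight
  simp only [Real.sqrt_mul' _ (pow_nonneg hp0 _), Real.sqrt_mul' _ (pow_nonneg hq _),
    Real.sqrt_mul' _ (Nat.cast_nonneg _)]
  conv_rhs => rw [← sqrt_pow_mul_sqrt_pow hq, ← Real.mul_self_sqrt (pow_nonneg hp0 k)]
  ring

theorem xi_mem_unit_interval_general (g : ℕ) (γ : ℝ) (hγ0 : 0 ≤ γ) (hγ1 : γ ≤ 1) :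
    0 ≤ ∑ k ∈ Finset.range g,
        Real.sqrt ((g.choose k : ℝ) * ((2 * g).choose k : ℝ)) *
          (1 - γ) ^ (3 * (g : ℝ) / 2 - (k : ℝ)) * γ ^ k ∧
    ∑ k ∈ Finset.range g,
        Real.sqrt ((g.choose k : ℝ) * ((2 * g).choose k : ℝ)) *
          (1 - γ) ^ (3 * (g : ℝ) / 2 - (k : ℝ)) * γ ^ k ≤ 1 := by
  have hterm : ∀ k ∈ range g,
      √((g.choose k : ℝ) * ((2 * g).choose k : ℝ)) * (1 - γ) ^ (3 * (g : ℝ) / 2 - (k : ℝ)) *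
          γ ^ k = √(binomialWeight g γ k) * √(binomialWeight (2 * g) γ k) := by
    intro k hk
    have hkg : k ≤ g := (mem_range.1 hk).le
    rw [sqrt_binomialWeight_mul_sqrt_binomialWeight hγ0 hγ1, Nat.cast_sub hkg,
      Nat.cast_sub (hkg.trans (by omega)), Nat.cast_mul, Nat.cast_two]
    ring_nf
  rw [sum_congr rfl hterm]
  refine ⟨sum_nonneg fun k _ => by positivity, ?_⟩
  have hnonneg := binomialWeight_nonneg hγ0 hγ1
  calc ∑ k ∈ range g, √(binomialWeight g γ k) * √(binomialWeight (2 * g) γ k)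
      ≤ √(∑ k ∈ range g, binomialWeight g γ k) *
          √(∑ k ∈ range g, binomialWeight (2 * g) γ k) :=
        Real.sum_sqrt_mul_sqrt_le _ (hnonneg g) (hnonneg (2 * g))
    _ ≤ 1 * 1 := by
        gcongr <;> rw [Real.sqrt_le_one]
        · exact sum_range_binomialWeight_le_one (by omega) hγ0 hγ1
        · exact sum_range_binomialWeight_le_one (by omega) hγ0 hγ1
    _ = 1 := one_mul 1

/-- The effective-dephasing overlap
`ξ = Σ_{k=0}^{g-1} √(C(g,k)·C(2g,k)) (1-γ)^{3g/2-k} γᵏ` satisfies `0 ≤ ξ ≤ 1`. -/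
theorem xi_mem_unit_interval (g : ℕ) (hg : 0 < g) (γ : ℝ) (hγ0 : 0 ≤ γ) (hγ1 : γ ≤ 1) :
    0 ≤ ∑ k ∈ Finset.range g,
        Real.sqrt ((g.choose k : ℝ) * ((2 * g).choose k : ℝ)) *
          (1 - γ) ^ (3 * (g : ℝ) / 2 - (k : ℝ)) * γ ^ k ∧
    ∑ k ∈ Finset.range g,
        Real.sqrt ((g.choose k : ℝ) * ((2 * g).choose k : ℝ)) *
          (1 - γ) ^ (3 * (g : ℝ) / 2 - (k : ℝ)) * γ ^ k ≤ 1 :=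
  xi_mem_unit_interval_general g γ hγ0 hγ1
end
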